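/- Let ϑ ∈ ℝ and fix y ∈ ℝ. Define k(t,s) = B(ϑ((s−y)² − t²)) for (t,s) ∈ ℝ². Then k is twice continuously differentiable on ℝ² and satisfies ∂²k/∂t²(t,s) − ∂²k/∂s²(t,s) − ϑ·k(t,s) = 0 for all (t,s) ∈ ℝ²; moreover k(0,s) = B(ϑ(s−y)²) and (∂k/∂t)(0,s) = 0 for all s ∈ ℝ, and k(t,s) = 1 whenever s − y = ±t. -/

import Mathlib

/-!
Termwise differentiation of the everywhere convergent series `B` shows that `B` is smooth and
solves `4zB''(z) + 4B'(z) + B(z) = 0`, Bessel's equation of order zero in the variable `z = x²`.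
For `q = ϑ((s - y)² - t²)` one has `(∂ₜq)² - (∂ₛq)² = -4ϑq` and `∂ₜ²q - ∂ₛ²q = -4ϑ`,
so the chain rule turns `∂ₜ²k - ∂ₛ²k` into `-ϑ(4qB''(q) + 4B'(q)) = ϑB(q)`.
-/

/-- `B z = ∑ (−z/4)ⁿ/(n!)²`, so that `B z = J₀(√z)` for `z ≥ 0`, where `J₀` is
the Bessel function of order zero. -/
noncomputable def besselB (z : ℝ) : ℝ :=
  ∑' n : ℕ, (-z / 4) ^ n / ((Nat.factorial n : ℝ)) ^ 2

open FormalMultilinearSeries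
open scoped Nat

section PowerSeries

variable {c : ℕ → ℝ}

def derivCoeff (c : ℕ → ℝ) (n : ℕ) : ℝ := (n + 1) * c (n + 1)

lemma ofScalarsSum_apply (c : ℕ → ℝ) (x : ℝ) : ofScalarsSum c x = ∑' n, c n * x ^ n := by
  simp [ofScalarsSum_eq_tsum]

lemma hasSum_ofScalarsSum (hc : ∀ r : ℝ, Summable fun n => c n * r ^ n) (x : ℝ) :
    HasSum (fun n => c n * x ^ n) (ofScalarsSum c x) := by
  rw [ofScalarsSum_apply]
  exact (hc x).hasSum

/-- The factor `n + 1` is absorbed by evaluating the original series at twice the radius. -/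
lemma summable_derivCoeff (hc : ∀ r : ℝ, Summable fun n => c n * r ^ n) (r : ℝ) :
    Summable fun n => derivCoeff c n * r ^ n := by
  set R := |r| + 1
  have hR : 1 ≤ R := by simp [R]
  refine Summable.of_norm_bounded ((summable_nat_add_iff 1).mpr (hc (2 * R)).abs) fun n => ?_
  have h2 : ((n : ℝ) + 1) ≤ 2 ^ (n + 1) := by exact_mod_cast (Nat.lt_two_pow_self).le
  have hr : |r| ^ n ≤ R ^ (n + 1) :=
    (pow_le_pow_left₀ (abs_nonneg r) (by simp [R]) n).trans (pow_le_pow_right₀ hR n.le_succ)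
  calc ‖derivCoeff c n * r ^ n‖ = ((n : ℝ) + 1) * |r| ^ n * |c (n + 1)| := by
        rw [derivCoeff, Real.norm_eq_abs, abs_mul, abs_mul, abs_pow, abs_of_pos (by positivity)]
        ring
    _ ≤ 2 ^ (n + 1) * R ^ (n + 1) * |c (n + 1)| := by gcongr
    _ = |c (n + 1) * (2 * R) ^ (n + 1)| := by
        rw [abs_mul, abs_of_pos (by positivity : (0 : ℝ) < (2 * R) ^ (n + 1)), mul_pow]
        ring

lemma hasDerivAt_ofScalarsSum (hc : ∀ r : ℝ, Summable fun n => c n * r ^ n) (x : ℝ) :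
    HasDerivAt (ofScalarsSum c) (ofScalarsSum (derivCoeff c) x) x := by
  set R := |x| + 1
  have hR : 0 < R := by positivity
  have hx : x ∈ Metric.ball (0 : ℝ) R := by simp [R]
  have hu : Summable fun n => |c n * (n * R ^ (n - 1))| := by
    refine (summable_nat_add_iff 1).mp ((summable_derivCoeff hc R).abs.congr fun n => ?_)
    simp only [derivCoeff, Nat.cast_succ, add_tsub_cancel_right, abs_mul]
    ring
  have hbound : ∀ n (z : ℝ), z ∈ Metric.ball (0 : ℝ) R →
      ‖c n * (n * z ^ (n - 1))‖ ≤ |c n * (n * R ^ (n - 1))| := by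
    intro n z hz
    rw [mem_ball_zero_iff, Real.norm_eq_abs] at hz
    simp only [Real.norm_eq_abs, abs_mul, abs_pow, Nat.abs_cast, abs_of_pos hR]
    gcongr
  have hderiv := hasDerivAt_tsum_of_isPreconnected hu Metric.isOpen_ball
    (convex_ball (0 : ℝ) R).isPreconnected (fun n z _ => (hasDerivAt_pow n z).const_mul (c n))
    hbound hx (hc x) hx
  have hshift : ofScalarsSum (derivCoeff c) x = ∑' n, c n * (n * x ^ (n - 1)) := by
    rw [tsum_eq_zero_add', ofScalarsSum_apply]
    · simp [derivCoeff, mul_comm, mul_left_comm]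
    · exact (summable_derivCoeff hc x).congr fun n => by simp [derivCoeff, mul_comm, mul_left_comm]
  rw [hshift, ofScalarsSum_eq_tsum]
  simpa using hderiv

lemma deriv_ofScalarsSum (hc : ∀ r : ℝ, Summable fun n => c n * r ^ n) :
    deriv (ofScalarsSum (E := ℝ) c) = ofScalarsSum (derivCoeff c) :=
  funext fun x => (hasDerivAt_ofScalarsSum hc x).deriv

lemma differentiable_ofScalarsSum (hc : ∀ r : ℝ, Summable fun n => c n * r ^ n) :
    Differentiable ℝ (ofScalarsSum (E := ℝ) c) :=
  fun x => (hasDerivAt_ofScalarsSum hc x).differentiableAt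

lemma contDiff_ofScalarsSum (hc : ∀ r : ℝ, Summable fun n => c n * r ^ n) (n : ℕ) :
    ContDiff ℝ n (ofScalarsSum (E := ℝ) c) := by
  induction n generalizing c with
  | zero => exact contDiff_zero.mpr (differentiable_ofScalarsSum hc).continuous
  | succ n ih =>
    rw [Nat.cast_succ, contDiff_succ_iff_deriv, deriv_ofScalarsSum hc]
    exact ⟨differentiable_ofScalarsSum hc, by simp, ih (summable_derivCoeff hc)⟩

lemma hasSum_mul_ofScalarsSum_derivCoeff (hc : ∀ r : ℝ, Summable fun n => c n * r ^ n)
    (x : ℝ) :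
    HasSum (fun n : ℕ => (n : ℝ) * c n * x ^ n) (x * ofScalarsSum (derivCoeff c) x) := by
  have h : HasSum (fun n => ((n + 1 : ℕ) : ℝ) * c (n + 1) * x ^ (n + 1))
      (x * ofScalarsSum (derivCoeff c) x) := by
    refine ((hasSum_ofScalarsSum (summable_derivCoeff hc) x).mul_left x).congr_fun fun n => ?_
    simp only [derivCoeff, Nat.cast_succ]
    ring
  simpa using HasSum.zero_add (f := fun n : ℕ => (n : ℝ) * c n * x ^ n) h

end PowerSeries

lemma deriv_deriv_comp {f q q' : ℝ → ℝ} {q'' x : ℝ} (hf : Differentiable ℝ f)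
    (hf' : DifferentiableAt ℝ (deriv f) (q x)) (hq : ∀ x, HasDerivAt q (q' x) x)
    (hq' : HasDerivAt q' q'' x) :
    deriv (fun x => deriv (fun x => f (q x)) x) x
      = deriv (deriv f) (q x) * q' x ^ 2 + deriv f (q x) * q'' := by
  have h : (fun x => deriv (fun x => f (q x)) x) = fun x => deriv f (q x) * q' x :=
    funext fun x => ((hf _).hasDerivAt.comp x (hq x)).deriv
  rw [h]
  exact ((hf'.hasDerivAt.comp x (hq x)).fun_mul hq').deriv.trans (by rw [Function.comp_apply]; ring)

lemma hasDerivAt_mul_const_sub_sq (ϑ a x : ℝ) :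
    HasDerivAt (fun x => ϑ * (a - x ^ 2)) (ϑ * (-2 * x)) x :=
  (((hasDerivAt_pow 2 x).const_sub a).const_mul ϑ).congr_deriv (by norm_num)

lemma hasDerivAt_mul_sub_sq_sub (ϑ y b x : ℝ) :
    HasDerivAt (fun x => ϑ * ((x - y) ^ 2 - b)) (ϑ * (2 * (x - y))) x :=
  (((((hasDerivAt_id' x).sub_const y).pow 2).sub_const b).const_mul ϑ).congr_deriv (by norm_num)

lemma wave_comp_interval {f : ℝ → ℝ} (hf : Differentiable ℝ f)
    (hf' : Differentiable ℝ (deriv f)) (ϑ y t s : ℝ) :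
    deriv (fun t' => deriv (fun t'' => f (ϑ * ((s - y) ^ 2 - t'' ^ 2))) t') t
        - deriv (fun s' => deriv (fun s'' => f (ϑ * ((s'' - y) ^ 2 - t ^ 2))) s') s
      = -ϑ * (4 * (ϑ * ((s - y) ^ 2 - t ^ 2)) * deriv (deriv f) (ϑ * ((s - y) ^ 2 - t ^ 2))
          + 4 * deriv f (ϑ * ((s - y) ^ 2 - t ^ 2))) := by
  have htt : HasDerivAt (fun t => ϑ * (-2 * t)) (ϑ * -2) t :=
    (((hasDerivAt_id' t).const_mul (-2)).const_mul ϑ).congr_deriv (by norm_num)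
  have hss : HasDerivAt (fun s => ϑ * (2 * (s - y))) (ϑ * 2) s :=
    ((((hasDerivAt_id' s).sub_const y).const_mul 2).const_mul ϑ).congr_deriv (by norm_num)
  rw [deriv_deriv_comp hf (hf' _) (hasDerivAt_mul_const_sub_sq ϑ _) htt,
    deriv_deriv_comp hf (hf' _) (hasDerivAt_mul_sub_sq_sub ϑ y _) hss]
  ring

noncomputable def besselCoeff (n : ℕ) : ℝ := (-1 / 4) ^ n / (n ! : ℝ) ^ 2

lemma besselB_eq_ofScalarsSum : besselB = ofScalarsSum besselCoeff := by
  funext z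
  rw [ofScalarsSum_apply]
  refine tsum_congr fun n => ?_
  rw [besselCoeff, show -z / 4 = -1 / 4 * z by ring, mul_pow]
  ring

lemma summable_besselCoeff_mul_pow (r : ℝ) : Summable fun n => besselCoeff n * r ^ n := by
  refine Summable.of_norm_bounded (Real.summable_pow_div_factorial (|r| / 4)) fun n => ?_
  have hfac : (1 : ℝ) ≤ n ! := by exact_mod_cast n.factorial_pos
  calc ‖besselCoeff n * r ^ n‖ = (|r| / 4) ^ n / (n ! : ℝ) ^ 2 := by
        rw [besselCoeff, norm_mul, norm_div, norm_pow, norm_pow, norm_pow, Real.norm_natCast,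
          Real.norm_eq_abs, Real.norm_eq_abs, abs_div, abs_neg, abs_one, abs_of_pos four_pos,
          div_pow, div_pow, one_pow]
        ring
    _ ≤ (|r| / 4) ^ n / n ! := by
        gcongr
        nlinarith

lemma besselCoeff_succ (n : ℕ) :
    4 * ((n : ℝ) + 1) ^ 2 * besselCoeff (n + 1) = -besselCoeff n := by
  rw [besselCoeff, besselCoeff, Nat.factorial_succ, Nat.cast_mul, Nat.cast_succ]
  field_simp
  ring

lemma besselB_zero : besselB 0 = 1 := by
  simp [besselB_eq_ofScalarsSum, besselCoeff]

lemma contDiff_besselB (n : ℕ) : ContDiff ℝ n besselB :=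
  besselB_eq_ofScalarsSum ▸ contDiff_ofScalarsSum summable_besselCoeff_mul_pow n

lemma differentiable_besselB : Differentiable ℝ besselB :=
  besselB_eq_ofScalarsSum ▸ differentiable_ofScalarsSum summable_besselCoeff_mul_pow

lemma differentiable_deriv_besselB : Differentiable ℝ (deriv besselB) := by
  rw [besselB_eq_ofScalarsSum, deriv_ofScalarsSum summable_besselCoeff_mul_pow]
  exact differentiable_ofScalarsSum (summable_derivCoeff summable_besselCoeff_mul_pow)

theorem besselB_ode (z : ℝ) :
    4 * z * deriv (deriv besselB) z + 4 * deriv besselB z + besselB z = 0 := by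
  have h₀ := summable_besselCoeff_mul_pow
  have h₁ := summable_derivCoeff h₀
  rw [besselB_eq_ofScalarsSum, deriv_ofScalarsSum h₀, deriv_ofScalarsSum h₁, mul_assoc]
  have hsum := (((hasSum_mul_ofScalarsSum_derivCoeff h₁ z).mul_left 4).add
    ((hasSum_ofScalarsSum h₁ z).mul_left 4)).add (hasSum_ofScalarsSum h₀ z)
  refine hsum.unique (hasSum_zero.congr_fun fun n => ?_)
  simp only [derivCoeff]
  linear_combination z ^ n * besselCoeff_succ n

/-- The kernel `k(t,s) = B(ϑ((s−y)² − t²))` is a `C²` solution of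
`∂²k/∂t² − ∂²k/∂s² − ϑ·k = 0` with `k(0,s) = B(ϑ(s−y)²)`, `∂ₜk(0,s) = 0`, and
`k(t,s) = 1` on the characteristics `s − y = ±t`. -/
theorem kernel_properties_klein_gordon
    (ϑ y : ℝ) (k : ℝ → ℝ → ℝ)
    (hk : ∀ t s : ℝ, k t s = besselB (ϑ * ((s - y) ^ 2 - t ^ 2))) :
    ContDiff ℝ 2 (fun p : ℝ × ℝ => k p.1 p.2) ∧
    (∀ t s : ℝ,
      deriv (fun t' => deriv (fun t'' => k t'' s) t') t
        - deriv (fun s' => deriv (fun s'' => k t s'') s') s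
        - ϑ * k t s = 0) ∧
    (∀ s : ℝ, k 0 s = besselB (ϑ * (s - y) ^ 2)) ∧
    (∀ s : ℝ, deriv (fun t => k t s) 0 = 0) ∧
    (∀ t s : ℝ, s - y = t ∨ s - y = -t → k t s = 1) := by
  simp only [hk]
  refine ⟨(contDiff_besselB 2).comp (by fun_prop), fun t s => ?_, fun s => by simp,
    fun s => ?_, fun t s hts => ?_⟩
  · rw [wave_comp_interval differentiable_besselB differentiable_deriv_besselB]
    linear_combination -ϑ * besselB_ode (ϑ * ((s - y) ^ 2 - t ^ 2))
  · exact ((differentiable_besselB _).hasDerivAt.comp 0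
      (hasDerivAt_mul_const_sub_sq ϑ ((s - y) ^ 2) 0)).deriv.trans (by simp)
  · rcases hts with h | h <;> simp [h, besselB_zero]
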